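/- Let p be a prime, r ≥ 1, and d₁,...,d_r, d'₁,...,d'_{r'} positive integers coprime to p, with j₁,...,j_r and j'₁,...,j'_{r'} nonnegative integers. If the polynomials ∏_{i=1}^{r} (1 - x^{dᵢ p^{jᵢ}})/(1 - x^{dᵢ}) and ∏_{i=1}^{r'} (1 - x^{d'ᵢ p^{j'ᵢ}})/(1 - x^{d'ᵢ}) in ℤ[x] are equal, and some degree d occurs among the dᵢ with jᵢ > 0, then d must occur among the d'ᵢ with j'ᵢ > 0 as well. -/

import Mathlib

/-!
A primitive `(e p)`-th root of unity `ζ`, with `p ∤ e`, is a simple root of the factor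
`(1 - x^{d p^j}) / (1 - x^d)` exactly when `e ∣ d` and `j > 0`, and is not a root otherwise.
Comparing root multiplicities at `ζ`, the two products have, for every such `e`, equally many
nontrivial factors whose degree `d` is a multiple of `e`. These counts determine the multiset of
degrees of the nontrivial factors, by downward induction on the degree.
-/

open Polynomial Finset

theorem Polynomial.rootMultiplicity_prod {R ι : Type*} [CommRing R] [IsDomain R]
    (s : Finset ι) (f : ι → R[X]) (hf : ∏ i ∈ s, f i ≠ 0) (a : R) :
    rootMultiplicity a (∏ i ∈ s, f i) = ∑ i ∈ s, rootMultiplicity a (f i) := by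
  classical
  simp_rw [← count_roots, roots_prod f s hf, Multiset.count_bind]
  rfl

theorem Polynomial.geom_sum_X_pow_mul {R : Type*} [CommRing R] (d n : ℕ) :
    (∑ k ∈ range n, (X : R[X]) ^ (k * d)) * (X ^ d - 1) = X ^ (d * n) - 1 := by
  simp_rw [mul_comm _ d, pow_mul]
  exact geom_sum_mul _ _

theorem Polynomial.rootMultiplicity_geom_sum_X_pow {K : Type*} [Field K] [DecidableEq K]
    {d n : ℕ} (hdn : ((d * n : ℕ) : K) ≠ 0) {ζ : K} (hζ : ζ ^ d ≠ 1) :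
    rootMultiplicity ζ (∑ k ∈ range n, X ^ (k * d)) = if ζ ^ (d * n) = 1 then 1 else 0 := by
  have hne : (X : K[X]) ^ (d * n) - 1 ≠ 0 :=
    X_pow_sub_C_ne_zero (Nat.pos_of_ne_zero fun h => hdn (by simp [h])) (1 : K)
  have hsep : ((X : K[X]) ^ (d * n) - 1).Separable := by
    simpa using separable_X_pow_sub_C (1 : K) hdn one_ne_zero
  have hroot : ∀ m, IsRoot ((X : K[X]) ^ m - 1) ζ ↔ ζ ^ m = 1 := by
    simp [sub_eq_zero]
  have hmul := rootMultiplicity_mul (x := ζ) (geom_sum_X_pow_mul (R := K) d n ▸ hne)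
  rw [geom_sum_X_pow_mul, rootMultiplicity_eq_zero (mt (hroot d).1 hζ), add_zero] at hmul
  rw [← hmul]
  split_ifs with h
  · exact le_antisymm (rootMultiplicity_le_one_of_separable hsep ζ)
      ((rootMultiplicity_pos hne).2 ((hroot _).2 h))
  · exact rootMultiplicity_eq_zero (mt (hroot _).1 h)

theorem Nat.mul_prime_dvd_mul_prime_pow_iff {p e a k : ℕ} (hp : p.Prime) (he : ¬ p ∣ e)
    (ha : ¬ p ∣ a) : e * p ∣ a * p ^ k ↔ e ∣ a ∧ 0 < k := by
  constructor
  · intro h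
    have hk : k ≠ 0 := by
      rintro rfl
      exact ha ((dvd_mul_left p e).trans (by simpa using h))
    exact ⟨((hp.coprime_iff_not_dvd.2 he).symm.pow_right k).dvd_of_dvd_mul_right
      ((dvd_mul_right e p).trans h), Nat.pos_of_ne_zero hk⟩
  · rintro ⟨hea, hk⟩
    rw [← Nat.sub_add_cancel hk, pow_succ, ← mul_assoc]
    exact mul_dvd_mul (hea.mul_right _) dvd_rfl

theorem Finset.eqOn_of_sum_filter_dvd_eq {M : Type*} [AddCancelCommMonoid M] {f g : ℕ → M}
    {S : Finset ℕ} (hS : 0 ∉ S)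
    (h : ∀ m ∈ S, ∑ n ∈ S with m ∣ n, f n = ∑ n ∈ S with m ∣ n, g n) :
    Set.EqOn f g S := by
  induction S using Finset.induction_on_min with
  | empty => simp
  | insert a T ha_lt ih =>
    have ha : a ∉ T := fun haT => lt_irrefl a (ha_lt a haT)
    have hndvd : ∀ m ∈ T, ¬ m ∣ a := fun m hm hdvd =>
      (ha_lt m hm).not_ge <|
        Nat.le_of_dvd (Nat.pos_of_ne_zero fun h0 => hS (h0 ▸ mem_insert_self _ _)) hdvd
    have hT : Set.EqOn f g T := by
      refine ih (fun h0 => hS (mem_insert_of_mem h0)) fun m hm => ?_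
      simpa [filter_insert, hndvd m hm] using h m (mem_insert_of_mem hm)
    intro m hm
    rcases mem_insert.1 hm with rfl | hm
    · have := h m (mem_insert_self _ _)
      rw [filter_insert, if_pos dvd_rfl, sum_insert (by simp [ha]), sum_insert (by simp [ha]),
        sum_congr rfl fun n hn => hT (mem_filter.1 hn).1] at this
      exact add_right_cancel this
    · exact hT hm

theorem Multiset.card_filter_eq_sum_count {α : Type*} [DecidableEq α] (q : α → Prop)
    [DecidablePred q] {s : Finset α} {m : Multiset α} (hms : ∀ a ∈ m, a ∈ s) :
    card (m.filter q) = ∑ a ∈ s with q a, m.count a := by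
  rw [← Multiset.sum_count_eq_card fun a ha => hms a (Multiset.mem_of_mem_filter ha),
    sum_filter]
  simp only [Multiset.count_filter]

theorem Multiset.eq_of_card_filter_dvd_eq {M M' : Multiset ℕ} (h0 : 0 ∉ M + M')
    (h : ∀ m ∈ M + M', card (M.filter (m ∣ ·)) = card (M'.filter (m ∣ ·))) : M = M' := by
  set S := (M + M').toFinset
  have hM : ∀ a ∈ M, a ∈ S := fun a ha => by simp [S, ha]
  have hM' : ∀ a ∈ M', a ∈ S := fun a ha => by simp [S, ha]
  ext a
  by_cases ha : a ∈ S
  · refine Finset.eqOn_of_sum_filter_dvd_eq (f := (count · M)) (g := (count · M'))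
      (by simpa [S] using h0) (fun m hm => ?_) ha
    rw [← card_filter_eq_sum_count _ hM, ← card_filter_eq_sum_count _ hM']
    exact h m (by simpa [S] using hm)
  · rw [count_eq_zero.2 fun h => ha (hM a h), count_eq_zero.2 fun h => ha (hM' a h)]

section NontrivialDegrees

variable {ι : Type*} [Fintype ι]

def nontrivialDegrees (d j : ι → ℕ) : Multiset ℕ :=
  (univ.filter fun i => 0 < j i).val.map d

theorem mem_nontrivialDegrees {d j : ι → ℕ} {m : ℕ} :
    m ∈ nontrivialDegrees d j ↔ ∃ i, 0 < j i ∧ d i = m := by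
  simp [nontrivialDegrees]

theorem card_filter_nontrivialDegrees (d j : ι → ℕ) (q : ℕ → Prop) [DecidablePred q] :
    Multiset.card ((nontrivialDegrees d j).filter q) = #{i | q (d i) ∧ 0 < j i} := by
  simp only [nontrivialDegrees, filter_val, Multiset.filter_map, Function.comp_apply,
    Multiset.filter_filter, Multiset.card_map]
  rfl

theorem rootMultiplicity_prod_geom_sum {K : Type*} [Field K] [CharZero K] [DecidableEq K]
    {p e : ℕ} (hp : p.Prime) (he : ¬ p ∣ e) {ζ : K} (hζ : IsPrimitiveRoot ζ (e * p))
    {d j : ι → ℕ} (hd : ∀ i, ¬ p ∣ d i) :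
    rootMultiplicity ζ (∏ i, ∑ k ∈ range (p ^ j i), X ^ (k * d i)) =
      Multiset.card ((nontrivialDegrees d j).filter (e ∣ ·)) := by
  have hζd : ∀ i, ζ ^ d i ≠ 1 := fun i h =>
    hd i ((dvd_mul_left p e).trans ((hζ.pow_eq_one_iff_dvd _).1 h))
  have hdn : ∀ i, ((d i * p ^ j i : ℕ) : K) ≠ 0 := fun i =>
    Nat.cast_ne_zero.2 (mul_ne_zero (fun h => hd i (h ▸ dvd_zero p)) (pow_ne_zero _ hp.ne_zero))
  have hne : ∏ i, ∑ k ∈ range (p ^ j i), (X : K[X]) ^ (k * d i) ≠ 0 :=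
    prod_ne_zero_iff.2 fun i _ => left_ne_zero_of_mul <| by
      rw [geom_sum_X_pow_mul]
      exact X_pow_sub_C_ne_zero (Nat.pos_of_ne_zero fun h => hdn i (by simp [h])) (1 : K)
  rw [rootMultiplicity_prod _ _ hne, card_filter_nontrivialDegrees, card_filter]
  refine sum_congr rfl fun i _ => ?_
  simp only [rootMultiplicity_geom_sum_X_pow (hdn i) (hζd i), hζ.pow_eq_one_iff_dvd,
    Nat.mul_prime_dvd_mul_prime_pow_iff hp he (hd i)]

end NontrivialDegrees

theorem deg_occurs_of_prod_geom_eq_general (p : ℕ) (hp : p.Prime) (r r' : ℕ)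
    (d : Fin r → ℕ) (j : Fin r → ℕ) (d' : Fin r' → ℕ) (j' : Fin r' → ℕ)
    (hcop : ∀ i, ¬ p ∣ d i) (hcop' : ∀ i, ¬ p ∣ d' i)
    (heq : (∏ i, ∑ k ∈ Finset.range (p ^ j i), (X : Polynomial ℤ) ^ (k * d i)) =
           (∏ i, ∑ k ∈ Finset.range (p ^ j' i), (X : Polynomial ℤ) ^ (k * d' i)))
    (i : Fin r) (hji : 0 < j i) :
    ∃ i' : Fin r', d' i' = d i ∧ 0 < j' i' := by
  have heqC := congrArg (Polynomial.map (Int.castRingHom ℂ)) heq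
  simp only [Polynomial.map_prod, Polynomial.map_sum, Polynomial.map_pow, Polynomial.map_X]
    at heqC
  have hcoprime : ∀ m ∈ nontrivialDegrees d j + nontrivialDegrees d' j', ¬ p ∣ m := by
    simp only [Multiset.mem_add, mem_nontrivialDegrees]
    rintro m (⟨i, -, rfl⟩ | ⟨i, -, rfl⟩)
    exacts [hcop i, hcop' i]
  have hdeg : nontrivialDegrees d j = nontrivialDegrees d' j' := by
    refine Multiset.eq_of_card_filter_dvd_eq (fun h0 => hcoprime 0 h0 (dvd_zero p))
      fun e he => ?_
    have hζ := Complex.isPrimitiveRoot_exp (e * p)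
      (mul_ne_zero (fun h => hcoprime e he (h ▸ dvd_zero p)) hp.ne_zero)
    rw [← rootMultiplicity_prod_geom_sum hp (hcoprime e he) hζ hcop,
      ← rootMultiplicity_prod_geom_sum hp (hcoprime e he) hζ hcop', heqC]
  obtain ⟨i', hi', hdi'⟩ :=
    mem_nontrivialDegrees.1 (hdeg ▸ mem_nontrivialDegrees.2 ⟨i, hji, rfl⟩)
  exact ⟨i', hdi', hi'⟩

/-- If two products `∏ᵢ (1 - x^{dᵢ pʲⁱ})/(1 - x^{dᵢ})` (written as products of
geometric sums) with the `dᵢ`, `d'ᵢ` positive and coprime to the prime `p` are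
equal in `ℤ[x]`, then any degree `dᵢ` occurring with `jᵢ > 0` also occurs among
the `d'ᵢ` with `j'ᵢ > 0`. -/
theorem deg_occurs_of_prod_geom_eq (p : ℕ) (hp : p.Prime) (r r' : ℕ)
    (d : Fin r → ℕ) (j : Fin r → ℕ) (d' : Fin r' → ℕ) (j' : Fin r' → ℕ)
    (hd : ∀ i, 0 < d i) (hd' : ∀ i, 0 < d' i)
    (hcop : ∀ i, ¬ p ∣ d i) (hcop' : ∀ i, ¬ p ∣ d' i)
    (heq : (∏ i, ∑ k ∈ Finset.range (p ^ j i), (X : Polynomial ℤ) ^ (k * d i)) =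
           (∏ i, ∑ k ∈ Finset.range (p ^ j' i), (X : Polynomial ℤ) ^ (k * d' i)))
    (i : Fin r) (hji : 0 < j i) :
    ∃ i' : Fin r', d' i' = d i ∧ 0 < j' i' :=
  deg_occurs_of_prod_geom_eq_general p hp r r' d j d' j' hcop hcop' heq i hji
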